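/- arXiv:1901.09568 — 2 statements merged into one kernel-verified Lean document; each statement's English description precedes it below -/
import Mathlib

section
/- For P_F ∈ (0,1), γ > 0 and positive integers m, p, the detection probability given by P_D = 1 − (1 − P_F)/(1 + γ(1 − (1 − P_F)^{1/(mp)}))^p satisfies P_D > P_F. -/
lemma one_lt_one_add_mul_one_sub_rpow {x e γ : ℝ} (hx₀ : 0 ≤ x) (hx₁ : x < 1) (he : 0 < e)
    (hγ : 0 < γ) : 1 < 1 + γ * (1 - x ^ e) :=
  lt_add_of_pos_right 1 (mul_pos hγ (sub_pos.2 (Real.rpow_lt_one hx₀ hx₁ he)))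

lemma lt_one_sub_div_of_one_lt {a D : ℝ} (ha : a < 1) (hD : 1 < D) : a < 1 - (1 - a) / D := by
  have := div_lt_self (sub_pos.2 ha) hD
  linarith

/-- For P_F ∈ (0,1) and γ > 0, P_D = 1 − (1−P_F)/(1+γ(1−(1−P_F)^{1/(mp)}))^p satisfies
P_D > P_F. -/
theorem stmt10 (m p : ℕ) (hm : 0 < m) (hp : 0 < p) (PF γ : ℝ)
    (hPF : PF ∈ Set.Ioo (0 : ℝ) 1) (hγ : 0 < γ) :
    PF < 1 - (1 - PF) / (1 + γ * (1 - (1 - PF) ^ ((1 : ℝ) / (m * p)))) ^ p := by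
  obtain ⟨hPF₀, hPF₁⟩ := hPF
  have hexp : (0 : ℝ) < 1 / (m * p) := by positivity
  have hbase :=
    one_lt_one_add_mul_one_sub_rpow (sub_nonneg.2 hPF₁.le) (sub_lt_self 1 hPF₀) hexp hγ
  exact lt_one_sub_div_of_one_lt hPF₁ (one_lt_pow₀ hbase hp.ne')
end

section
/- Define g(p) = 1 − (1 − P_F)/(1 + γ − γ(1 − P_F)^{1/(ν p²)})^p for real p > 0 (extending m = ν p to real values). Then g(p) → P_F as p → ∞. -/
open Filter Topology Real

/-- g(p) = 1 − (1−P_F)/(1+γ−γ exp(ln(1−P_F)/(νp²)))^p → P_F as p → ∞. -/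
theorem stmt11 (PF γ ν : ℝ) (hPF : PF ∈ Set.Ioo (0 : ℝ) 1) (hγ : 0 < γ) (hν : 0 < ν) :
    Tendsto
      (fun p : ℝ =>
        1 - (1 - PF) / (1 + γ - γ * Real.exp (Real.log (1 - PF) / (ν * p ^ 2))) ^ p)
      atTop (𝓝 PF) := by
  obtain ⟨hPF0, hPF1⟩ := hPF
  have h1PF : 0 < 1 - PF := by linarith
  have hc : Real.log (1 - PF) < 0 := Real.log_neg h1PF (by linarith)
  set c := Real.log (1 - PF) with hcdef
  set u : ℝ → ℝ := fun p => c / (ν * p ^ 2) with hu_def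
  set F : ℝ → ℝ := fun t => Real.log (1 + γ - γ * Real.exp t) with hF_def
  have hg : HasDerivAt (fun t => 1 + γ - γ * Real.exp t) (-γ) 0 := by
    have h := ((Real.hasDerivAt_exp 0).const_mul γ)
    have h2 := (hasDerivAt_const (0 : ℝ) (1 + γ)).sub h
    have h3 : HasDerivAt (fun t => 1 + γ - γ * Real.exp t) (0 - γ * Real.exp 0) 0 := h2
    rw [Real.exp_zero, mul_one, zero_sub] at h3
    exact h3
  have hF : HasDerivAt F (-γ) 0 := by
    have := hg.log (by norm_num)
    simpa [hF_def] using this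
  have hslope : Tendsto (fun t => F t / t) (𝓝[≠] 0) (𝓝 (-γ)) := by
    have h := hasDerivAt_iff_tendsto_slope.mp hF
    refine h.congr (fun t => ?_)
    simp [slope_def_field, hF_def]
  have hu0 : Tendsto u atTop (𝓝 0) :=
    tendsto_const_nhds.div_atTop ((tendsto_pow_atTop two_ne_zero).const_mul_atTop hν)
  have hu : Tendsto u atTop (𝓝[≠] 0) := by
    refine tendsto_nhdsWithin_of_tendsto_nhds_of_eventually_within _ hu0 ?_
    filter_upwards [eventually_gt_atTop 0] with p hp
    exact div_ne_zero (ne_of_lt hc) (by positivity)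
  have h1 : Tendsto (fun p => F (u p) / u p) atTop (𝓝 (-γ)) := hslope.comp hu
  have h2 : Tendsto (fun p => u p * p) atTop (𝓝 0) := by
    have base : Tendsto (fun p : ℝ => c / (ν * p)) atTop (𝓝 0) :=
      tendsto_const_nhds.div_atTop (tendsto_id.const_mul_atTop hν)
    refine base.congr' ?_
    filter_upwards [eventually_gt_atTop 0] with p hp
    simp only [hu_def]
    field_simp
  have hprod : Tendsto (fun p => F (u p) * p) atTop (𝓝 0) := by
    have h3 := h1.mul h2
    rw [neg_mul, mul_zero, neg_zero] at h3
    refine h3.congr' ?_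
    filter_upwards [eventually_gt_atTop 0] with p hp
    have hup : u p ≠ 0 := div_ne_zero (ne_of_lt hc) (by positivity)
    field_simp
  have hexp : Tendsto (fun p => Real.exp (F (u p) * p)) atTop (𝓝 1) := by
    have := (Real.continuous_exp.tendsto 0).comp hprod
    simpa [Function.comp_def] using this
  have ha1 : Tendsto (fun p => 1 + γ - γ * Real.exp (u p)) atTop (𝓝 1) := by
    have he : Tendsto (fun p => Real.exp (u p)) atTop (𝓝 1) := by
      have := (Real.continuous_exp.tendsto 0).comp hu0
      simpa [Function.comp_def] using this
    have := (he.const_mul γ).const_sub (1 + γ)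
    simpa using this
  have hapos : ∀ᶠ p in atTop, 0 < 1 + γ - γ * Real.exp (u p) :=
    ha1.eventually (eventually_gt_nhds one_pos)
  have hmain : Tendsto (fun p => 1 - (1 - PF) / Real.exp (F (u p) * p)) atTop (𝓝 PF) := by
    have h := ((tendsto_const_nhds (x := 1 - PF)).div hexp one_ne_zero).const_sub 1
    have heq : (1 : ℝ) - (1 - PF) / 1 = PF := by ring
    rwa [heq] at h
  refine hmain.congr' ?_
  filter_upwards [hapos] with p hp
  show 1 - (1 - PF) / Real.exp (F (u p) * p) = _
  rw [show F (u p) = Real.log (1 + γ - γ * Real.exp (u p)) from rfl,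
    ← Real.rpow_def_of_pos hp]
end
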